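/- arXiv:0901.0686 — 2 statements merged into one kernel-verified Lean document; each statement's English description precedes it below -/
import Mathlib

section
/- Let k be a field, n ≥ 1, and let g ∈ k[x_1,…,x_d] with g = h_1 ⋯ h_r a factorization into irreducible polynomials that are pairwise non-associated. Suppose R = k[z,x_1,…,x_d]/(z^n − g) is a normal domain. Then the intersection of the ideals 𝔭_i = (z, h_i)R, for i = 1,…,r, equals the principal ideal zR; that is, ⋂_{i=1}^r (z, h_i)R = zR. -/
/-!
Let `A = k[x₁,…,x_d]` and let `z` be the image of `X` in `R = A[X]/(Xⁿ - g)`. For `b ∣ g` and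
`n ≥ 1` the ideal `(X, b) = {p | b ∣ p(0)}` of `A[X]` contains `Xⁿ - g`, so it is the preimage
of `(z, b)R`. As `A[X] → R` is surjective, the intersection may be computed in `A[X]`, where
`⋂ᵢ {p | hᵢ ∣ p(0)} = {p | g ∣ p(0)}` because the `hᵢ` are pairwise coprime in the UFD `A`.
Going back down gives `(z, g)R`, which is `zR` since `g = zⁿ` in `R`.
-/

open Polynomial

theorem Ideal.iInf_span_singleton_of_irreducible {R ι : Type*} [CommSemiring R]
    [DecompositionMonoid R] [Fintype ι] {p : ι → R} (hirr : ∀ i, Irreducible (p i))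
    (hassoc : ∀ i j, i ≠ j → ¬ Associated (p i) (p j)) :
    ⨅ i, Ideal.span {p i} = Ideal.span {∏ i, p i} := by
  ext x
  simp only [Ideal.mem_iInf, Ideal.mem_span_singleton]
  refine ⟨Fintype.prod_dvd_of_isRelPrime fun i j hij ↦ ?_,
    fun hx i ↦ (Finset.dvd_prod_of_mem p (Finset.mem_univ i)).trans hx⟩
  exact (hirr i).isRelPrime_iff_not_dvd.2
    fun hdvd ↦ hassoc i j hij ((hirr i).associated_of_dvd (hirr j) hdvd)

namespace Polynomial

variable {A : Type*} [CommRing A]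

theorem span_X_C_eq_comap_constantCoeff (b : A) :
    Ideal.span {X, C b} = (Ideal.span {b}).comap (constantCoeff : A[X] →+* A) := by
  have hmap : (Ideal.span {X, C b}).map (constantCoeff : A[X] →+* A) = Ideal.span {b} := by
    rw [Ideal.map_span, Set.image_pair, constantCoeff_apply, constantCoeff_apply, coeff_X_zero,
      coeff_C_zero, Ideal.span_insert_zero]
  rw [← hmap, Ideal.comap_map_of_surjective' _ (constantCoeff_surjective (R := A)),
    ker_constantCoeff, eq_comm, sup_eq_left]
  exact Ideal.span_mono (Set.singleton_subset_iff.2 (Set.mem_insert _ _))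

variable {n : ℕ} {a b : A}

theorem span_X_pow_sub_C_le_span_X_C (hn : n ≠ 0) (hb : b ∣ a) :
    Ideal.span {X ^ n - C a} ≤ Ideal.span {X, C b} := by
  rw [span_X_C_eq_comap_constantCoeff, Ideal.span_le, Set.singleton_subset_iff, SetLike.mem_coe,
    Ideal.mem_comap, constantCoeff_apply, coeff_sub, coeff_X_pow, if_neg hn.symm, coeff_C_zero,
    zero_sub, neg_mem_iff]
  exact Ideal.mem_span_singleton.2 hb

local notation "mkₐ" => Ideal.Quotient.mk (Ideal.span {X ^ n - C a})

theorem comap_mk_span_X_C (hn : n ≠ 0) (hb : b ∣ a) :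
    (Ideal.span {mkₐ X, mkₐ (C b)}).comap mkₐ =
      (Ideal.span {b}).comap (constantCoeff : A[X] →+* A) := by
  rw [← Set.image_pair, ← Ideal.map_span,
    Ideal.comap_map_of_surjective' _ Ideal.Quotient.mk_surjective, Ideal.mk_ker,
    sup_eq_left.2 (span_X_pow_sub_C_le_span_X_C hn hb), span_X_C_eq_comap_constantCoeff]

theorem span_mk_X_C_eq_span_mk_X (hn : n ≠ 0) :
    Ideal.span {mkₐ X, mkₐ (C a)} = Ideal.span {mkₐ X} := by
  have hC : mkₐ (C a) = mkₐ X ^ n := by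
    rw [← map_pow, Ideal.Quotient.eq]
    exact neg_mem_iff.1 (by simpa only [neg_sub] using Ideal.mem_span_singleton_self (X ^ n - C a))
  rw [hC, Ideal.span_insert, sup_eq_left, Ideal.span_singleton_le_span_singleton]
  exact dvd_pow_self _ hn

end Polynomial

theorem divisor_class_stmt_2_general {k : Type*} [Field k] {d n r : ℕ} (hn : 1 ≤ n)
    (g : MvPolynomial (Fin d) k) (h : Fin r → MvPolynomial (Fin d) k)
    (hirr : ∀ i, Irreducible (h i))
    (hassoc : ∀ i j, i ≠ j → ¬ Associated (h i) (h j))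
    (hg : g = ∏ i, h i) :
    (⨅ i : Fin r, Ideal.span
        {Ideal.Quotient.mk (Ideal.span {Polynomial.X ^ n - Polynomial.C g}) Polynomial.X,
         Ideal.Quotient.mk (Ideal.span {Polynomial.X ^ n - Polynomial.C g})
           (Polynomial.C (h i))}) =
      Ideal.span
        {Ideal.Quotient.mk (Ideal.span {Polynomial.X ^ n - Polynomial.C g}) Polynomial.X} := by
  have hn0 : n ≠ 0 := Nat.one_le_iff_ne_zero.1 hn
  have hdvd (i : Fin r) : h i ∣ g := hg ▸ Finset.dvd_prod_of_mem h (Finset.mem_univ i)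
  rw [← Ideal.map_iInf_comap_of_surjective _ Ideal.Quotient.mk_surjective]
  simp_rw [comap_mk_span_X_C hn0 (hdvd _)]
  rw [← Ideal.comap_iInf, Ideal.iInf_span_singleton_of_irreducible hirr hassoc, ← hg,
    ← comap_mk_span_X_C hn0 dvd_rfl, Ideal.map_comap_of_surjective _ Ideal.Quotient.mk_surjective,
    span_mk_X_C_eq_span_mk_X hn0]

/-- Let `k` be a field, `n ≥ 1`, and let `g ∈ k[x_1,…,x_d]` with
`g = h_1 ⋯ h_r` a factorization into irreducible polynomials that are pairwise non-associated.
Suppose `R = k[z,x_1,…,x_d]/(zⁿ − g)` is a normal domain.  Then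
`⋂_{i=1}^r (z, h_i)R = zR`.  Here `k[z,x_1,…,x_d]` is realized as the polynomial ring in `z`
over `k[x_1,…,x_d]`, so `z = Polynomial.X` and the `h_i` are included via `Polynomial.C`. -/
theorem divisor_class_stmt_2 {k : Type*} [Field k] {d n r : ℕ} (hn : 1 ≤ n) (hr : 1 ≤ r)
    (g : MvPolynomial (Fin d) k) (h : Fin r → MvPolynomial (Fin d) k)
    (hirr : ∀ i, Irreducible (h i))
    (hassoc : ∀ i j, i ≠ j → ¬ Associated (h i) (h j))
    (hg : g = ∏ i, h i)
    [IsDomain (Polynomial (MvPolynomial (Fin d) k) ⧸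
      Ideal.span {Polynomial.X ^ n - Polynomial.C g})]
    [IsIntegrallyClosed (Polynomial (MvPolynomial (Fin d) k) ⧸
      Ideal.span {Polynomial.X ^ n - Polynomial.C g})] :
    (⨅ i : Fin r, Ideal.span
        {Ideal.Quotient.mk (Ideal.span {Polynomial.X ^ n - Polynomial.C g}) Polynomial.X,
         Ideal.Quotient.mk (Ideal.span {Polynomial.X ^ n - Polynomial.C g})
           (Polynomial.C (h i))}) =
      Ideal.span
        {Ideal.Quotient.mk (Ideal.span {Polynomial.X ^ n - Polynomial.C g}) Polynomial.X} :=
  divisor_class_stmt_2_general hn g h hirr hassoc hg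
end

section
/- Let k be an algebraically closed field, let a, b, c be positive integers with gcd(a,b) = 1, and suppose the characteristic of k is zero or does not divide c. Then the polynomial x_1^{ac} + x_2^{bc} is a product of exactly c irreducible polynomials in k[x_1,x_2], and these c irreducible factors are pairwise non-associated; explicitly, x_1^{ac} + x_2^{bc} = ∏_ζ (x_1^a − ζ·x_2^b), the product ranging over the c distinct roots ζ of t^c = −1 in k. -/
/-!
Over `k` the roots of `t^c + 1` are simple because `c ≠ 0` in `k`, so `t^c + 1 = ∏ (t - ζ)`;
homogenizing gives `u^c + v^c = ∏ (u - ζ v)`, and we substitute `u = x₀^a`, `v = x₁^b`.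
A factor `x₀^a - ζ x₁^b` is monic in `x₀` over the integrally closed ring `k[x₁]`. For odd `a`,
Gauss's lemma and Capelli's criterion make it irreducible unless `ζ x₁^b` is a `p`-th power in
`k[x₁]` for a prime `p ∣ a`, which would force `p ∣ b`. For even `a`, `b` is odd and the variables
trade places. Distinct monic factors are never associated.
-/

open scoped Classical

open Polynomial

namespace IsSepClosed

variable {k : Type*} [Field k] [IsSepClosed k] {c : ℕ} [NeZero (c : k)]

theorem nodup_nthRoots {x : k} (hx : x ≠ 0) : (nthRoots c x).Nodup :=
  (HasEnoughRootsOfUnity.exists_primitiveRoot k c).choose_spec.nthRoots_nodup hx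

theorem card_nthRoots (x : k) : Multiset.card (nthRoots c x) = c := by
  rw [(HasEnoughRootsOfUnity.exists_primitiveRoot k c).choose_spec.card_nthRoots,
    if_pos (exists_pow_nat_eq x c)]

theorem card_nthRootsFinset {x : k} (hx : x ≠ 0) : (nthRootsFinset c x).card = c := by
  rw [nthRootsFinset_def, Multiset.toFinset_card_of_nodup (nodup_nthRoots hx), card_nthRoots]

theorem prod_X_sub_C_nthRootsFinset {x : k} (hx : x ≠ 0) :
    ∏ ζ ∈ nthRootsFinset c x, (X - C ζ) = X ^ c - C x := by
  rw [nthRootsFinset_def, Finset.prod_eq_multiset_prod, Multiset.toFinset_val,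
    (nodup_nthRoots hx).dedup]
  exact prod_multiset_X_sub_C_of_monic_of_roots_card_eq
    (monic_X_pow_sub_C x (NeZero.of_neZero_natCast k).out)
    (by rw [← nthRoots, card_nthRoots, natDegree_X_pow_sub_C])

theorem pow_add_pow_eq_prod_sub_mul {A : Type*} [CommRing A] [Algebra k A] (u v : A) :
    u ^ c + v ^ c = ∏ ζ ∈ nthRootsFinset c (-1 : k), (u - algebraMap k A ζ * v) := by
  set S := nthRootsFinset c (-1 : k)
  have h1 : (-1 : k) ≠ 0 := neg_ne_zero.mpr one_ne_zero
  have key : homogenize (∏ ζ ∈ S, (X - C ζ)) (∑ ζ ∈ S, 1) = homogenize (X ^ c + 1) c := by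
    rw [← Finset.card_eq_sum_ones, card_nthRootsFinset h1, prod_X_sub_C_nthRootsFinset h1,
      map_neg, map_one, sub_neg_eq_add]
  rw [homogenize_finsetProd (s := S) (p := fun ζ ↦ X - C ζ) (n := fun _ ↦ 1)
    fun ζ _ ↦ natDegree_X_sub_C_le ζ] at key
  simpa [Algebra.smul_def] using congrArg (MvPolynomial.aeval ![u, v]) key.symm

end IsSepClosed

theorem X_pow_sub_C_irreducible_of_odd_of_isIntegrallyClosed {R : Type*} [CommRing R]
    [IsDomain R] [IsIntegrallyClosed R] {n : ℕ} (hn : Odd n) {r : R}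
    (hr : ∀ p : ℕ, p.Prime → p ∣ n → ∀ s : R, s ^ p ≠ r) : Irreducible (X ^ n - C r : R[X]) := by
  let K := FractionRing R
  rw [(monic_X_pow_sub_C r hn.pos.ne').irreducible_iff_irreducible_map_fraction_map (K := K),
    Polynomial.map_sub, Polynomial.map_pow, map_X, map_C]
  refine X_pow_sub_C_irreducible_of_odd hn fun p hp hpn β hβ ↦ ?_
  obtain ⟨s, rfl⟩ := IsIntegrallyClosed.isIntegral_iff.mp
    (IsIntegral.of_pow hp.pos (hβ ▸ isIntegral_algebraMap))
  exact hr p hp hpn s (IsFractionRing.injective R K (by rw [map_pow, hβ]))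

theorem irreducible_X_pow_sub_C_C_mul_X_pow_of_odd {k : Type*} [Field k] {a b : ℕ} (ha : Odd a)
    (hab : a.Coprime b) {z : k} (hz : z ≠ 0) :
    Irreducible (X ^ a - C (C z * X ^ b) : k[X][X]) := by
  refine X_pow_sub_C_irreducible_of_odd_of_isIntegrallyClosed ha fun p hp hpa s hs ↦ hp.ne_one ?_
  have hpb : p ∣ b := by
    rw [← natDegree_C_mul_X_pow b z hz, ← hs, natDegree_pow]
    exact dvd_mul_right p _
  exact Nat.eq_one_of_dvd_coprimes hab hpa hpb

theorem Polynomial.eq_of_associated_X_pow_sub_C {R : Type*} [CommRing R] [IsDomain R] {n : ℕ}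
    (hn : n ≠ 0) {r s : R} (h : Associated (X ^ n - C r) (X ^ n - C s)) : r = s :=
  C_injective <| sub_right_inj.mp <|
    eq_of_monic_of_associated (monic_X_pow_sub_C r hn) (monic_X_pow_sub_C s hn) h

namespace MvPolynomial

noncomputable def finTwoAlgEquiv (k : Type*) [CommSemiring k] :
    MvPolynomial (Fin 2) k ≃ₐ[k] k[X][X] :=
  (finSuccEquiv k 1).trans <| Polynomial.mapAlgEquiv <|
    (finSuccEquiv k 0).trans <| Polynomial.mapAlgEquiv <| isEmptyAlgEquiv k (Fin 0)

theorem finTwoAlgEquiv_X_pow_sub_C_mul_X_pow {k : Type*} [CommRing k] (a b : ℕ) (z : k) :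
    finTwoAlgEquiv k (X 0 ^ a - C z * X 1 ^ b) =
      Polynomial.X ^ a - Polynomial.C (Polynomial.C z * Polynomial.X ^ b) := by
  have hX0 : finTwoAlgEquiv k (X 0) = Polynomial.X := by
    simp [finTwoAlgEquiv, finSuccEquiv_X_zero]
  have hX1 : finTwoAlgEquiv k (X 1) = Polynomial.C Polynomial.X := by
    rw [show (1 : Fin 2) = Fin.succ 0 from rfl]
    simp only [finTwoAlgEquiv, AlgEquiv.trans_apply, finSuccEquiv_X_succ, coe_mapAlgEquiv,
      Polynomial.map_C, RingHom.coe_coe]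
    rw [finSuccEquiv_X_zero]
    simp
  have hC : finTwoAlgEquiv k (C z) = Polynomial.C (Polynomial.C z) := by
    simpa [Polynomial.algebraMap_apply, algebraMap_eq] using (finTwoAlgEquiv k).commutes z
  rw [map_sub, map_mul, map_pow, map_pow, hX0, hX1, hC, Polynomial.C_mul, Polynomial.C_pow]

theorem eq_of_associated_X_pow_sub_C_mul_X_pow {k : Type*} [CommRing k] [IsDomain k] {a b : ℕ}
    (ha : a ≠ 0) {z w : k}
    (h : Associated (X 0 ^ a - C z * X 1 ^ b : MvPolynomial (Fin 2) k)
      (X 0 ^ a - C w * X 1 ^ b)) : z = w := by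
  have h' := h.map (finTwoAlgEquiv k)
  rw [finTwoAlgEquiv_X_pow_sub_C_mul_X_pow, finTwoAlgEquiv_X_pow_sub_C_mul_X_pow] at h'
  exact Polynomial.C_injective <|
    mul_right_cancel₀ (pow_ne_zero b Polynomial.X_ne_zero) (eq_of_associated_X_pow_sub_C ha h')

variable {k : Type*} [Field k] {a b : ℕ}

theorem irreducible_X_pow_sub_C_mul_X_pow_of_odd (ha : Odd a) (hab : a.Coprime b) {z : k}
    (hz : z ≠ 0) : Irreducible (X 0 ^ a - C z * X 1 ^ b : MvPolynomial (Fin 2) k) := by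
  rw [← MulEquiv.irreducible_iff (finTwoAlgEquiv k), finTwoAlgEquiv_X_pow_sub_C_mul_X_pow]
  exact irreducible_X_pow_sub_C_C_mul_X_pow_of_odd ha hab hz

theorem irreducible_X_pow_sub_C_mul_X_pow (hab : a.Coprime b) {z : k} (hz : z ≠ 0) :
    Irreducible (X 0 ^ a - C z * X 1 ^ b : MvPolynomial (Fin 2) k) := by
  rcases Nat.even_or_odd a with ha | ha
  · have hb : Odd b := Nat.coprime_two_left.mp (hab.coprime_dvd_left ha.two_dvd)
    have hCC : C z * C z⁻¹ = (1 : MvPolynomial (Fin 2) k) := by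
      rw [← map_mul, mul_inv_cancel₀ hz, map_one]
    have hswap : X 0 ^ a - C z * X 1 ^ b = -C z *
        renameEquiv k (Equiv.swap (0 : Fin 2) 1) (X 0 ^ b - C z⁻¹ * X 1 ^ a) := by
      simp only [renameEquiv_apply, map_sub, map_mul, map_pow, rename_X, rename_C,
        Equiv.swap_apply_left, Equiv.swap_apply_right]
      linear_combination (-X 0 ^ a) * hCC
    rw [hswap, irreducible_isUnit_mul (hz.isUnit.map C).neg, MulEquiv.irreducible_iff]
    exact irreducible_X_pow_sub_C_mul_X_pow_of_odd hb hab.symm (inv_ne_zero hz)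
  · exact irreducible_X_pow_sub_C_mul_X_pow_of_odd ha hab hz

end MvPolynomial

theorem divisor_class_stmt_13_general {k : Type*} [Field k] [IsAlgClosed k] {a b c : ℕ}
    (ha : 0 < a) (hab : Nat.Coprime a b) (hck : (c : k) ≠ 0) :
    (Polynomial.nthRoots c (-1 : k)).toFinset.card = c ∧
    (∀ ζ ∈ (Polynomial.nthRoots c (-1 : k)).toFinset,
      Irreducible (MvPolynomial.X 0 ^ a - MvPolynomial.C ζ * MvPolynomial.X 1 ^ b :
        MvPolynomial (Fin 2) k)) ∧
    (∀ ζ ∈ (Polynomial.nthRoots c (-1 : k)).toFinset,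
      ∀ ξ ∈ (Polynomial.nthRoots c (-1 : k)).toFinset, ζ ≠ ξ →
        ¬ Associated
          (MvPolynomial.X 0 ^ a - MvPolynomial.C ζ * MvPolynomial.X 1 ^ b :
            MvPolynomial (Fin 2) k)
          (MvPolynomial.X 0 ^ a - MvPolynomial.C ξ * MvPolynomial.X 1 ^ b)) ∧
    (MvPolynomial.X 0 ^ (a * c) + MvPolynomial.X 1 ^ (b * c) : MvPolynomial (Fin 2) k) =
      ∏ ζ ∈ (Polynomial.nthRoots c (-1 : k)).toFinset,
        (MvPolynomial.X 0 ^ a - MvPolynomial.C ζ * MvPolynomial.X 1 ^ b) := by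
  have : NeZero (c : k) := ⟨hck⟩
  have hneg_one : (-1 : k) ≠ 0 := neg_ne_zero.mpr one_ne_zero
  simp only [← nthRootsFinset_def]
  refine ⟨IsSepClosed.card_nthRootsFinset hneg_one, fun ζ hζ ↦ ?_,
    fun ζ _ ξ _ hne h ↦ hne (MvPolynomial.eq_of_associated_X_pow_sub_C_mul_X_pow ha.ne' h), ?_⟩
  · exact MvPolynomial.irreducible_X_pow_sub_C_mul_X_pow hab
      (ne_zero_of_mem_nthRootsFinset hneg_one hζ)
  · rw [pow_mul, pow_mul, IsSepClosed.pow_add_pow_eq_prod_sub_mul (k := k),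
      MvPolynomial.algebraMap_eq]

/-- Let `k` be an algebraically closed field, `a, b, c` positive integers
with `gcd(a,b) = 1`, and suppose the characteristic of `k` is zero or does not divide `c`
(equivalently, `c` is nonzero in `k`).  Then `x₁^{ac} + x₂^{bc}` is a product of exactly `c`
irreducible polynomials in `k[x₁,x₂]`, pairwise non-associated; explicitly
`x₁^{ac} + x₂^{bc} = ∏_ζ (x₁^a − ζ·x₂^b)`, the product over the `c` distinct roots `ζ` of
`t^c = −1` in `k`.  Here `k[x₁,x₂]` is realized as `MvPolynomial (Fin 2) k` and the set of
roots of `t^c = −1` as `(Polynomial.nthRoots c (-1 : k)).toFinset`. -/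
theorem divisor_class_stmt_13 {k : Type*} [Field k] [IsAlgClosed k] {a b c : ℕ}
    (ha : 0 < a) (hb : 0 < b) (hc : 0 < c) (hab : Nat.Coprime a b) (hck : (c : k) ≠ 0) :
    (Polynomial.nthRoots c (-1 : k)).toFinset.card = c ∧
    (∀ ζ ∈ (Polynomial.nthRoots c (-1 : k)).toFinset,
      Irreducible (MvPolynomial.X 0 ^ a - MvPolynomial.C ζ * MvPolynomial.X 1 ^ b :
        MvPolynomial (Fin 2) k)) ∧
    (∀ ζ ∈ (Polynomial.nthRoots c (-1 : k)).toFinset,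
      ∀ ξ ∈ (Polynomial.nthRoots c (-1 : k)).toFinset, ζ ≠ ξ →
        ¬ Associated
          (MvPolynomial.X 0 ^ a - MvPolynomial.C ζ * MvPolynomial.X 1 ^ b :
            MvPolynomial (Fin 2) k)
          (MvPolynomial.X 0 ^ a - MvPolynomial.C ξ * MvPolynomial.X 1 ^ b)) ∧
    (MvPolynomial.X 0 ^ (a * c) + MvPolynomial.X 1 ^ (b * c) : MvPolynomial (Fin 2) k) =
      ∏ ζ ∈ (Polynomial.nthRoots c (-1 : k)).toFinset,
        (MvPolynomial.X 0 ^ a - MvPolynomial.C ζ * MvPolynomial.X 1 ^ b) :=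
  divisor_class_stmt_13_general ha hab hck
end
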